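/- arXiv:2403.03422 — 2 statements merged into one kernel-verified Lean document; each statement's English description precedes it below -/
import Mathlib

section
/- The generating polynomials D_n(x) = Σ_k D_{n,k} x^k of set partitions into blocks of size at least 2 satisfy D_n(x) = x·D'_{n-1}(x) + (n−1)·x·D_{n-2}(x) for n ≥ 2, with D_0(x) = 1 and D_1(x) = 0. -/
open Polynomial Finset

attribute [local instance] Classical.propDecidable

/-- The number of set partitions of `Fin n` into exactly `k` blocks, each of size
at least 2 (associated Stirling numbers of the second kind). -/
noncomputable def assocStirling2 (n k : ℕ) : ℕ :=
  Nat.card {P : Finpartition (Finset.univ : Finset (Fin n)) //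
    P.parts.card = k ∧ ∀ b ∈ P.parts, 2 ≤ b.card}

/-- plain-finset version of the predicate -/
def IsPart {m : ℕ} (Q : Finset (Finset (Fin m))) : Prop :=
  ∀ a : Fin m, ∃! b, b ∈ Q ∧ a ∈ b

noncomputable def PF (m k : ℕ) : Finset (Finset (Finset (Fin m))) :=
  Finset.univ.filter (fun Q => IsPart Q ∧ Q.card = k ∧ ∀ b ∈ Q, 2 ≤ b.card)

lemma mem_PF {m k : ℕ} {Q : Finset (Finset (Fin m))} :
    Q ∈ PF m k ↔ IsPart Q ∧ Q.card = k ∧ ∀ b ∈ Q, 2 ≤ b.card := by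
  simp [PF]

lemma assocStirling2_eq_card_PF (n k : ℕ) : assocStirling2 n k = (PF n k).card := by
  rw [assocStirling2, ← Nat.card_eq_finsetCard]
  apply Nat.card_congr
  refine
    { toFun := fun P => ⟨P.1.parts, ?_⟩
      invFun := fun Q => ⟨⟨Q.1, ?_, ?_, ?_⟩, ?_, ?_⟩
      left_inv := fun P => by
        apply Subtype.ext; apply Finpartition.ext; rfl
      right_inv := fun Q => rfl }
  · rcases P with ⟨P, h1, h2⟩
    rw [mem_PF]
    exact ⟨fun a => P.existsUnique_mem (mem_univ a), h1, h2⟩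
  · -- supIndep
    rw [Finset.supIndep_iff_pairwiseDisjoint]
    intro b hb c hc hbc
    simp only [Function.onFun, id]
    rw [Finset.disjoint_left]
    intro a hab hac
    obtain ⟨h1, -, -⟩ := mem_PF.1 Q.2
    obtain ⟨u, -, hu⟩ := h1 a
    exact hbc ((hu b ⟨hb, hab⟩).trans (hu c ⟨hc, hac⟩).symm)
  · -- sup = univ
    obtain ⟨h1, -, -⟩ := mem_PF.1 Q.2
    apply le_antisymm le_top
    intro a _
    obtain ⟨b, ⟨hb, hab⟩, -⟩ := h1 a
    exact Finset.mem_sup.2 ⟨b, hb, hab⟩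
  · -- ⊥ ∉
    obtain ⟨-, -, h3⟩ := mem_PF.1 Q.2
    intro h
    simpa using h3 _ h
  · exact (mem_PF.1 Q.2).2.1
  · exact (mem_PF.1 Q.2).2.2

lemma sum_card_of_isPart {m : ℕ} {Q : Finset (Finset (Fin m))} (h : IsPart Q) :
    ∑ b ∈ Q, b.card = m := by
  have hdisj : (Q : Set (Finset (Fin m))).PairwiseDisjoint id := by
    intro b hb c hc hbc
    simp only [Function.onFun, id]
    rw [Finset.disjoint_left]
    intro a hab hac
    obtain ⟨u, -, hu⟩ := h a
    exact hbc ((hu b ⟨hb, hab⟩).trans (hu c ⟨hc, hac⟩).symm)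
  have hcover : Q.biUnion id = Finset.univ := by
    apply Finset.eq_univ_of_forall
    intro a
    obtain ⟨b, ⟨hb, hab⟩, -⟩ := h a
    exact Finset.mem_biUnion.2 ⟨b, hb, hab⟩
  calc ∑ b ∈ Q, b.card = (Q.biUnion id).card :=
        (Finset.card_biUnion fun b hb c hc hbc => hdisj hb hc hbc).symm
    _ = m := by rw [hcover]; simp

lemma PF_eq_empty_of_zero {n : ℕ} (hn : 1 ≤ n) : PF n 0 = ∅ := by
  ext Q
  simp only [mem_PF, Finset.notMem_empty, iff_false]
  rintro ⟨h1, h2, -⟩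
  obtain ⟨b, ⟨hb, -⟩, -⟩ := h1 ⟨0, hn⟩
  rw [Finset.card_eq_zero] at h2
  simp [h2] at hb

lemma PF_eq_empty_of_big {n k : ℕ} (h : n < 2 * k) : PF n k = ∅ := by
  ext Q
  simp only [mem_PF, Finset.notMem_empty, iff_false]
  rintro ⟨h1, h2, h3⟩
  have := sum_card_of_isPart h1
  have h4 : 2 * k ≤ ∑ b ∈ Q, b.card := by
    calc 2 * k = ∑ _b ∈ Q, 2 := by rw [Finset.sum_const, h2]; ring
    _ ≤ _ := Finset.sum_le_sum h3
  omega

lemma PF_zero_zero : PF 0 0 = {∅} := by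
  ext Q
  simp only [mem_PF, Finset.mem_singleton]
  constructor
  · rintro ⟨-, h2, -⟩
    exact Finset.card_eq_zero.1 h2
  · rintro rfl
    refine ⟨fun a => absurd a.2 (by omega), by simp, by simp⟩

section Lift

variable {m : ℕ}

/-- lift a finset along castSucc -/
def fup (b : Finset (Fin (m+1))) : Finset (Fin (m+2)) :=
  b.map ⟨Fin.castSucc, Fin.castSucc_injective _⟩

noncomputable def fdown (c : Finset (Fin (m+2))) : Finset (Fin (m+1)) :=
  c.preimage Fin.castSucc (Fin.castSucc_injective _).injOn

@[simp] lemma mem_fup {x : Fin (m+2)} {b : Finset (Fin (m+1))} :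
    x ∈ fup b ↔ ∃ y ∈ b, Fin.castSucc y = x := by simp [fup]

@[simp] lemma castSucc_mem_fup {y : Fin (m+1)} {b : Finset (Fin (m+1))} :
    Fin.castSucc y ∈ fup b ↔ y ∈ b := by
  simp [fup, Fin.castSucc_inj]

lemma last_not_mem_fup {b : Finset (Fin (m+1))} : Fin.last (m+1) ∉ fup b := by
  simp only [mem_fup, not_exists]
  rintro y ⟨-, hy⟩
  exact (Fin.castSucc_lt_last y).ne hy

@[simp] lemma card_fup (b : Finset (Fin (m+1))) : (fup b).card = b.card := Finset.card_map _

lemma fup_injective : Function.Injective (fup (m := m)) := Finset.map_injective _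

@[simp] lemma mem_fdown {y : Fin (m+1)} {c : Finset (Fin (m+2))} :
    y ∈ fdown c ↔ Fin.castSucc y ∈ c := Finset.mem_preimage

lemma fup_fdown {c : Finset (Fin (m+2))} (h : Fin.last (m+1) ∉ c) : fup (fdown c) = c := by
  ext x
  cases x using Fin.lastCases with
  | last => simp only [mem_fup]; constructor
            · rintro ⟨y, -, hy⟩; exact absurd hy (Fin.castSucc_lt_last y).ne
            · intro hx; exact absurd hx h
  | cast y => simp

lemma fdown_fup (b : Finset (Fin (m+1))) : fdown (fup b) = b := by
  ext y; simp

end Lift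

lemma IsPart.eq_of_mem {m : ℕ} {Q : Finset (Finset (Fin m))} (h : IsPart Q)
    {b c : Finset (Fin m)} {a : Fin m} (hb : b ∈ Q) (hc : c ∈ Q) (hab : a ∈ b) (hac : a ∈ c) :
    b = c := by
  obtain ⟨u, -, hu⟩ := h a
  exact (hu b ⟨hb, hab⟩).trans (hu c ⟨hc, hac⟩).symm

lemma part1 (m k : ℕ) :
    ((PF (m+2) (k+1)).filter
        (fun Q => ∃ b ∈ Q, Fin.last (m+1) ∈ b ∧ 3 ≤ b.card)).card
      = (k+1) * (PF (m+1) (k+1)).card := by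
  classical
  have h1 : ((PF (m+1) (k+1)).sigma (fun Q' => Q')).card
      = (k+1) * (PF (m+1) (k+1)).card := by
    rw [Finset.card_sigma,
      Finset.sum_congr rfl (fun Q' hQ' => (mem_PF.1 hQ').2.1)]
    simp [mul_comm]
  rw [← h1]
  symm
  apply Finset.card_bij
    (i := fun p _ => insert (insert (Fin.last (m+1)) (fup p.2)) ((p.1.erase p.2).image fup))
  · -- maps to
    rintro ⟨Q', b'⟩ hp
    rw [Finset.mem_sigma] at hp
    obtain ⟨hQmem, hb⟩ := hp
    obtain ⟨hP, hcard, hsize⟩ := mem_PF.1 hQmem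
    set B0 := insert (Fin.last (m+1)) (fup b') with hB0
    set R := (Q'.erase b').image fup with hR
    have hlastB0 : Fin.last (m+1) ∈ B0 := Finset.mem_insert_self _ _
    have hB0notR : B0 ∉ R := by
      simp only [hR, Finset.mem_image]
      rintro ⟨d, -, hd⟩
      exact last_not_mem_fup (b := d) (hd ▸ hlastB0)
    have hmemF : ∀ {c}, c ∈ insert B0 R ↔ c = B0 ∨ ∃ d ∈ Q'.erase b', fup d = c := by
      intro c; simp [hR]
    have hcardB0 : B0.card = b'.card + 1 := by
      rw [hB0, Finset.card_insert_of_notMem last_not_mem_fup, card_fup]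
    have hb2 := hsize b' hb
    have hpart : IsPart (insert B0 R) := by
      intro a
      induction a using Fin.lastCases with
      | last =>
        refine ⟨B0, ⟨Finset.mem_insert_self _ _, hlastB0⟩, ?_⟩
        rintro c ⟨hc, hlc⟩
        rcases hmemF.1 hc with rfl | ⟨d, hd, rfl⟩
        · rfl
        · exact absurd hlc last_not_mem_fup
      | cast y =>
        obtain ⟨c0, ⟨hc0, hyc0⟩, huniq⟩ := hP y
        by_cases hcb : c0 = b'
        · subst hcb
          refine ⟨B0, ⟨Finset.mem_insert_self _ _,
            hB0 ▸ Finset.mem_insert_of_mem (castSucc_mem_fup.2 hyc0)⟩, ?_⟩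
          rintro c ⟨hc, hyc⟩
          rcases hmemF.1 hc with rfl | ⟨d, hd, rfl⟩
          · rfl
          · exact absurd (huniq d ⟨Finset.mem_of_mem_erase hd, castSucc_mem_fup.1 hyc⟩)
              (Finset.ne_of_mem_erase hd)
        · refine ⟨fup c0, ⟨hmemF.2 (Or.inr ⟨c0, Finset.mem_erase.2 ⟨hcb, hc0⟩, rfl⟩),
            castSucc_mem_fup.2 hyc0⟩, ?_⟩
          rintro c ⟨hc, hyc⟩
          rcases hmemF.1 hc with rfl | ⟨d, hd, rfl⟩
          · exfalso
            rw [hB0, Finset.mem_insert] at hyc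
            rcases hyc with h | h
            · exact (Fin.castSucc_lt_last y).ne h
            · exact hcb (huniq b' ⟨hb, castSucc_mem_fup.1 h⟩).symm
          · rw [huniq d ⟨Finset.mem_of_mem_erase hd, castSucc_mem_fup.1 hyc⟩]
    rw [Finset.mem_filter, mem_PF]
    refine ⟨⟨hpart, ?_, ?_⟩, B0, Finset.mem_insert_self _ _, hlastB0, by omega⟩
    · rw [Finset.card_insert_of_notMem hB0notR, hR,
        Finset.card_image_of_injOn fup_injective.injOn,
        Finset.card_erase_of_mem hb, hcard]
      omega
    · intro c hc
      rcases hmemF.1 hc with rfl | ⟨d, hd, rfl⟩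
      · omega
      · rw [card_fup]; exact hsize d (Finset.mem_of_mem_erase hd)
  · -- injective
    rintro ⟨Q1, b1⟩ hp1 ⟨Q2, b2⟩ hp2 heq
    rw [Finset.mem_sigma] at hp1 hp2
    dsimp only at heq
    have hB0 : insert (Fin.last (m+1)) (fup b1) = insert (Fin.last (m+1)) (fup b2) := by
      have h1 : insert (Fin.last (m+1)) (fup b1)
          ∈ insert (insert (Fin.last (m+1)) (fup b2)) ((Q2.erase b2).image fup) := by
        rw [← heq]; exact Finset.mem_insert_self _ _
      rcases Finset.mem_insert.1 h1 with h | h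
      · exact h
      · exfalso
        obtain ⟨d, -, hd⟩ := Finset.mem_image.1 h
        exact last_not_mem_fup (b := d) (hd ▸ Finset.mem_insert_self _ _)
    have hb12 : b1 = b2 := by
      apply fup_injective
      have := congrArg (fun s => Finset.erase s (Fin.last (m+1))) hB0
      simpa [Finset.erase_insert_of_ne, Finset.erase_insert,
        Finset.erase_eq_of_notMem last_not_mem_fup] using this
    subst hb12
    have hR : (Q1.erase b1).image fup = (Q2.erase b1).image fup := by
      have hnot : ∀ Q : Finset (Finset (Fin (m+1))),
          insert (Fin.last (m+1)) (fup b1) ∉ (Q.erase b1).image fup := by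
        intro Q h
        obtain ⟨d, -, hd⟩ := Finset.mem_image.1 h
        exact last_not_mem_fup (b := d) (hd ▸ Finset.mem_insert_self _ _)
      have := congrArg (fun s => Finset.erase s (insert (Fin.last (m+1)) (fup b1))) heq
      simpa [hB0, Finset.erase_insert (hnot Q1), Finset.erase_insert (hnot Q2)] using this
    have hQ12 : Q1.erase b1 = Q2.erase b1 :=
      Finset.image_injective fup_injective hR
    have hb1 : b1 ∈ Q1 := hp1.2
    have hb2 : b1 ∈ Q2 := hp2.2
    have : Q1 = Q2 := by
      rw [← Finset.insert_erase hb1, ← Finset.insert_erase hb2, hQ12]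
    subst this
    rfl
  · -- surjective
    intro Q hQ
    rw [Finset.mem_filter, mem_PF] at hQ
    obtain ⟨⟨hP, hcard, hsize⟩, B, hB, hlB, hB3⟩ := hQ
    have hlastonly : ∀ c ∈ Q, Fin.last (m+1) ∈ c → c = B :=
      fun c hc hlc => hP.eq_of_mem hc hB hlc hlB
    have hnolast : ∀ c ∈ Q.erase B, Fin.last (m+1) ∉ c := by
      intro c hc hlc
      exact Finset.ne_of_mem_erase hc (hlastonly c (Finset.mem_of_mem_erase hc) hlc)
    set b' := fdown (B.erase (Fin.last (m+1))) with hb'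
    have hfupb' : fup b' = B.erase (Fin.last (m+1)) :=
      fup_fdown (Finset.notMem_erase _ _)
    have hupdown : ∀ c ∈ Q.erase B, fup (fdown c) = c :=
      fun c hc => fup_fdown (hnolast c hc)
    have hb'notim : b' ∉ (Q.erase B).image fdown := by
      rintro h
      obtain ⟨c, hc, hcd⟩ := Finset.mem_image.1 h
      have : c = B.erase (Fin.last (m+1)) := by
        rw [← hupdown c hc, hcd, hfupb']
      obtain ⟨a, ha⟩ : (B.erase (Fin.last (m+1))).Nonempty := by
        rw [← Finset.card_pos, Finset.card_erase_of_mem hlB]; omega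
      exact Finset.ne_of_mem_erase hc
        (hP.eq_of_mem (Finset.mem_of_mem_erase hc) hB (this ▸ ha)
          (Finset.mem_of_mem_erase ha))
    set Q' := insert b' ((Q.erase B).image fdown) with hQ'
    have hdowninj : Set.InjOn (fdown (m := m)) ↑(Q.erase B) := by
      intro c1 h1 c2 h2 h12
      rw [← hupdown c1 h1, ← hupdown c2 h2, h12]
    have hmemQ' : ∀ {c}, c ∈ Q' ↔ c = b' ∨ ∃ d ∈ Q.erase B, fdown d = c := by
      intro c; simp [hQ']
    have hQ'mem : Q' ∈ PF (m+1) (k+1) := by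
      rw [mem_PF]
      refine ⟨?_, ?_, ?_⟩
      · intro y
        obtain ⟨c0, ⟨hc0, hyc0⟩, huniq⟩ := hP (Fin.castSucc y)
        by_cases hcB : c0 = B
        · subst hcB
          have hyb' : y ∈ b' := by
            rw [hb', mem_fdown, Finset.mem_erase]
            exact ⟨(Fin.castSucc_lt_last y).ne, hyc0⟩
          refine ⟨b', ⟨Finset.mem_insert_self _ _, hyb'⟩, ?_⟩
          rintro c ⟨hc, hyc⟩
          rcases hmemQ'.1 hc with rfl | ⟨d, hd, rfl⟩
          · rfl
          · exact absurd (huniq d ⟨Finset.mem_of_mem_erase hd, mem_fdown.1 hyc⟩)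
              (Finset.ne_of_mem_erase hd)
        · refine ⟨fdown c0, ⟨hmemQ'.2 (Or.inr ⟨c0, Finset.mem_erase.2 ⟨hcB, hc0⟩, rfl⟩),
            mem_fdown.2 hyc0⟩, ?_⟩
          rintro c ⟨hc, hyc⟩
          rcases hmemQ'.1 hc with rfl | ⟨d, hd, rfl⟩
          · exfalso
            have : Fin.castSucc y ∈ B := by
              have := mem_fdown.1 hyc
              rw [hb'] at hyc
              exact Finset.mem_of_mem_erase (mem_fdown.1 hyc)
            exact hcB (huniq B ⟨hB, this⟩).symm
          · rw [huniq d ⟨Finset.mem_of_mem_erase hd, mem_fdown.1 hyc⟩]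
      · rw [hQ', Finset.card_insert_of_notMem hb'notim,
          Finset.card_image_of_injOn hdowninj, Finset.card_erase_of_mem hB, hcard]
        omega
      · intro c hc
        rcases hmemQ'.1 hc with rfl | ⟨d, hd, rfl⟩
        · have : (fup b').card = B.card - 1 := by
            rw [hfupb', Finset.card_erase_of_mem hlB]
          rw [card_fup] at this
          omega
        · have : (fup (fdown d)).card = d.card := by rw [hupdown d hd]
          rw [card_fup] at this
          rw [this]
          exact hsize d (Finset.mem_of_mem_erase hd)
    refine ⟨⟨Q', b'⟩, Finset.mem_sigma.2 ⟨hQ'mem, Finset.mem_insert_self _ _⟩, ?_⟩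
    dsimp only
    have h1 : insert (Fin.last (m+1)) (fup b') = B := by
      rw [hfupb', Finset.insert_erase hlB]
    have h2 : Q'.erase b' = (Q.erase B).image fdown := by
      rw [hQ', Finset.erase_insert hb'notim]
    rw [h1, h2, Finset.image_image]
    have h3 : (Q.erase B).image (fup ∘ fdown) = Q.erase B := by
      rw [show (fup ∘ fdown : Finset (Fin (m+2)) → Finset (Fin (m+2))) = fun c => fup (fdown c) from rfl]
      rw [Finset.image_congr (g := id) (fun c hc => hupdown c hc), Finset.image_id]
    rw [h3, Finset.insert_erase hB]

section Lift2

variable {m : ℕ}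

lemma ej_injective (j : Fin (m+1)) :
    Function.Injective (fun y : Fin m => Fin.castSucc (j.succAbove y)) :=
  (Fin.castSucc_injective _).comp (Fin.succAbove_right_injective)

def gup (j : Fin (m+1)) (b : Finset (Fin m)) : Finset (Fin (m+2)) :=
  b.map ⟨fun y => Fin.castSucc (j.succAbove y), ej_injective j⟩

noncomputable def gdown (j : Fin (m+1)) (c : Finset (Fin (m+2))) : Finset (Fin m) :=
  c.preimage (fun y => Fin.castSucc (j.succAbove y)) (ej_injective j).injOn

@[simp] lemma mem_gup {j : Fin (m+1)} {x : Fin (m+2)} {b : Finset (Fin m)} :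
    x ∈ gup j b ↔ ∃ y ∈ b, Fin.castSucc (j.succAbove y) = x := by simp [gup]

@[simp] lemma ej_mem_gup {j : Fin (m+1)} {y : Fin m} {b : Finset (Fin m)} :
    Fin.castSucc (j.succAbove y) ∈ gup j b ↔ y ∈ b := by
  simp only [mem_gup]
  constructor
  · rintro ⟨y', hy', h⟩
    rwa [← ej_injective j h]
  · intro h; exact ⟨y, h, rfl⟩

lemma last_not_mem_gup {j : Fin (m+1)} {b : Finset (Fin m)} : Fin.last (m+1) ∉ gup j b := by
  simp only [mem_gup, not_exists]
  rintro y ⟨-, hy⟩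
  exact (Fin.castSucc_lt_last _).ne hy

lemma castSucc_self_not_mem_gup {j : Fin (m+1)} {b : Finset (Fin m)} :
    Fin.castSucc j ∉ gup j b := by
  simp only [mem_gup, not_exists]
  rintro y ⟨-, hy⟩
  exact Fin.succAbove_ne j y (Fin.castSucc_injective _ hy)

@[simp] lemma card_gup (j : Fin (m+1)) (b : Finset (Fin m)) : (gup j b).card = b.card :=
  Finset.card_map _

lemma gup_injective (j : Fin (m+1)) : Function.Injective (gup (m := m) j) :=
  Finset.map_injective _

@[simp] lemma mem_gdown {j : Fin (m+1)} {y : Fin m} {c : Finset (Fin (m+2))} :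
    y ∈ gdown j c ↔ Fin.castSucc (j.succAbove y) ∈ c := Finset.mem_preimage

lemma gup_gdown {j : Fin (m+1)} {c : Finset (Fin (m+2))} (h1 : Fin.last (m+1) ∉ c)
    (h2 : Fin.castSucc j ∉ c) : gup j (gdown j c) = c := by
  ext x
  cases x using Fin.lastCases with
  | last =>
    constructor
    · intro h; exact absurd h last_not_mem_gup
    · intro h; exact absurd h h1
  | cast x' =>
    by_cases hx' : x' = j
    · subst hx'
      constructor
      · intro h; exact absurd h castSucc_self_not_mem_gup
      · intro h; exact absurd h h2
    · obtain ⟨y, rfl⟩ := Fin.exists_succAbove_eq (Ne.symm (Ne.symm hx'))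
      rw [ej_mem_gup, mem_gdown]

end Lift2

lemma part2 (m k : ℕ) :
    ((PF (m+2) (k+1)).filter
        (fun Q => ¬ ∃ b ∈ Q, Fin.last (m+1) ∈ b ∧ 3 ≤ b.card)).card
      = (m+1) * (PF m k).card := by
  classical
  have h1 : (((Finset.univ : Finset (Fin (m+1)))) ×ˢ PF m k).card
      = (m+1) * (PF m k).card := by
    rw [Finset.card_product, Finset.card_univ, Fintype.card_fin]
  rw [← h1]
  symm
  apply Finset.card_bij
    (i := fun p _ => insert {Fin.last (m+1), Fin.castSucc p.1} (p.2.image (gup p.1)))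
  · -- maps to
    rintro ⟨j, Q''⟩ hp
    rw [Finset.mem_product] at hp
    obtain ⟨-, hQmem⟩ := hp
    obtain ⟨hP, hcard, hsize⟩ := mem_PF.1 hQmem
    set P0 : Finset (Fin (m+2)) := {Fin.last (m+1), Fin.castSucc j} with hP0
    set R := Q''.image (gup j) with hR
    have hne : Fin.castSucc j ≠ Fin.last (m+1) := (Fin.castSucc_lt_last _).ne
    have hlastP0 : Fin.last (m+1) ∈ P0 := Finset.mem_insert_self _ _
    have hjP0 : Fin.castSucc j ∈ P0 := by simp [hP0]
    have hcardP0 : P0.card = 2 := by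
      rw [hP0, Finset.card_insert_of_notMem (by simp [hne.symm]), Finset.card_singleton]
    have hP0notR : P0 ∉ R := by
      simp only [hR, Finset.mem_image]
      rintro ⟨d, -, hd⟩
      exact last_not_mem_gup (j := j) (b := d) (hd ▸ hlastP0)
    have hmemF : ∀ {c}, c ∈ insert P0 R ↔ c = P0 ∨ ∃ d ∈ Q'', gup j d = c := by
      intro c; simp [hR]
    have hpart : IsPart (insert P0 R) := by
      intro a
      induction a using Fin.lastCases with
      | last =>
        refine ⟨P0, ⟨Finset.mem_insert_self _ _, hlastP0⟩, ?_⟩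
        rintro c ⟨hc, hlc⟩
        rcases hmemF.1 hc with rfl | ⟨d, hd, rfl⟩
        · rfl
        · exact absurd hlc last_not_mem_gup
      | cast x' =>
        by_cases hx' : x' = j
        · subst hx'
          refine ⟨P0, ⟨Finset.mem_insert_self _ _, hjP0⟩, ?_⟩
          rintro c ⟨hc, hxc⟩
          rcases hmemF.1 hc with rfl | ⟨d, hd, rfl⟩
          · rfl
          · exact absurd hxc castSucc_self_not_mem_gup
        · obtain ⟨y, rfl⟩ := Fin.exists_succAbove_eq (Ne.symm (Ne.symm hx'))
          obtain ⟨c0, ⟨hc0, hyc0⟩, huniq⟩ := hP y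
          refine ⟨gup j c0, ⟨hmemF.2 (Or.inr ⟨c0, hc0, rfl⟩), ej_mem_gup.2 hyc0⟩, ?_⟩
          rintro c ⟨hc, hyc⟩
          rcases hmemF.1 hc with rfl | ⟨d, hd, rfl⟩
          · exfalso
            rw [hP0, Finset.mem_insert, Finset.mem_singleton] at hyc
            rcases hyc with h | h
            · exact (Fin.castSucc_lt_last _).ne h
            · exact Fin.succAbove_ne j y (Fin.castSucc_injective _ h)
          · rw [huniq d ⟨hd, ej_mem_gup.1 hyc⟩]
    rw [Finset.mem_filter, mem_PF]
    refine ⟨⟨hpart, ?_, ?_⟩, ?_⟩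
    · rw [Finset.card_insert_of_notMem hP0notR, hR,
        Finset.card_image_of_injOn (gup_injective j).injOn, hcard]
    · intro c hc
      rcases hmemF.1 hc with rfl | ⟨d, hd, rfl⟩
      · omega
      · rw [card_gup]; exact hsize d hd
    · rintro ⟨b, hb, hlb, h3⟩
      rcases hmemF.1 hb with rfl | ⟨d, hd, rfl⟩
      · omega
      · exact last_not_mem_gup hlb
  · -- injective
    rintro ⟨j1, Q1⟩ hp1 ⟨j2, Q2⟩ hp2 heq
    dsimp only at heq
    have hlast1 : ({Fin.last (m+1), Fin.castSucc j1} : Finset (Fin (m+2)))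
        ∈ insert ({Fin.last (m+1), Fin.castSucc j2} : Finset (Fin (m+2))) (Q2.image (gup j2)) := by
      rw [← heq]; exact Finset.mem_insert_self _ _
    have hP0eq : ({Fin.last (m+1), Fin.castSucc j1} : Finset (Fin (m+2)))
        = {Fin.last (m+1), Fin.castSucc j2} := by
      rcases Finset.mem_insert.1 hlast1 with h | h
      · exact h
      · exfalso
        obtain ⟨d, -, hd⟩ := Finset.mem_image.1 h
        exact last_not_mem_gup (j := j2) (b := d) (hd ▸ Finset.mem_insert_self _ _)
    have hj : j1 = j2 := by
      have : Fin.castSucc j1 ∈ ({Fin.last (m+1), Fin.castSucc j2} : Finset (Fin (m+2))) := by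
        rw [← hP0eq]; simp
      rcases Finset.mem_insert.1 this with h | h
      · exact absurd h (Fin.castSucc_lt_last _).ne
      · exact Fin.castSucc_injective _ (Finset.mem_singleton.1 h)
    subst hj
    have hnotim : ∀ Q : Finset (Finset (Fin m)),
        ({Fin.last (m+1), Fin.castSucc j1} : Finset (Fin (m+2))) ∉ Q.image (gup j1) := by
      intro Q h
      obtain ⟨d, -, hd⟩ := Finset.mem_image.1 h
      exact last_not_mem_gup (j := j1) (b := d) (hd ▸ Finset.mem_insert_self _ _)
    have hR : Q1.image (gup j1) = Q2.image (gup j1) := by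
      have := congrArg
        (fun s => Finset.erase s ({Fin.last (m+1), Fin.castSucc j1} : Finset (Fin (m+2)))) heq
      simpa [Finset.erase_insert (hnotim Q1), Finset.erase_insert (hnotim Q2)] using this
    have : Q1 = Q2 := Finset.image_injective (gup_injective j1) hR
    subst this
    rfl
  · -- surjective
    intro Q hQ
    rw [Finset.mem_filter, mem_PF] at hQ
    obtain ⟨⟨hP, hcard, hsize⟩, hno3⟩ := hQ
    obtain ⟨B, ⟨hB, hlB⟩, -⟩ := hP (Fin.last (m+1))
    have hB2 : B.card = 2 := by
      have h1 := hsize B hB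
      have h2 : ¬ 3 ≤ B.card := fun h => hno3 ⟨B, hB, hlB, h⟩
      omega
    obtain ⟨z, hz⟩ : ∃ z, B.erase (Fin.last (m+1)) = {z} := by
      rw [← Finset.card_eq_one, Finset.card_erase_of_mem hlB, hB2]
    have hzB : z ∈ B := Finset.mem_of_mem_erase (hz ▸ Finset.mem_singleton_self z)
    have hzne : z ≠ Fin.last (m+1) :=
      Finset.ne_of_mem_erase (hz ▸ Finset.mem_singleton_self z)
    have hBeq : B = {Fin.last (m+1), z} := by
      rw [← Finset.insert_erase hlB, hz]
    set j := z.castPred hzne with hj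
    have hcsj : Fin.castSucc j = z := Fin.castSucc_castPred z hzne
    have hlastonly : ∀ c ∈ Q, Fin.last (m+1) ∈ c → c = B :=
      fun c hc hlc => hP.eq_of_mem hc hB hlc hlB
    have hnolast : ∀ c ∈ Q.erase B, Fin.last (m+1) ∉ c := by
      intro c hc hlc
      exact Finset.ne_of_mem_erase hc (hlastonly c (Finset.mem_of_mem_erase hc) hlc)
    have hnoz : ∀ c ∈ Q.erase B, Fin.castSucc j ∉ c := by
      intro c hc hzc
      rw [hcsj] at hzc
      exact Finset.ne_of_mem_erase hc (hP.eq_of_mem (Finset.mem_of_mem_erase hc) hB hzc hzB)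
    have hupdown : ∀ c ∈ Q.erase B, gup j (gdown j c) = c :=
      fun c hc => gup_gdown (hnolast c hc) (hnoz c hc)
    set Q'' := (Q.erase B).image (gdown j) with hQ''
    have hdowninj : Set.InjOn (gdown (m := m) j) ↑(Q.erase B) := by
      intro c1 h1 c2 h2 h12
      rw [← hupdown c1 h1, ← hupdown c2 h2, h12]
    have hmemQ'' : ∀ {c}, c ∈ Q'' ↔ ∃ d ∈ Q.erase B, gdown j d = c := by
      intro c; simp [hQ'']
    have hQ''mem : Q'' ∈ PF m k := by
      rw [mem_PF]
      refine ⟨?_, ?_, ?_⟩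
      · intro y
        obtain ⟨c0, ⟨hc0, hyc0⟩, huniq⟩ := hP (Fin.castSucc (j.succAbove y))
        have hc0B : c0 ≠ B := by
          intro h
          subst h
          rw [hBeq, Finset.mem_insert, Finset.mem_singleton] at hyc0
          rcases hyc0 with h | h
          · exact (Fin.castSucc_lt_last _).ne h
          · rw [← hcsj] at h
            exact Fin.succAbove_ne j y (Fin.castSucc_injective _ h)
        have hc0e : c0 ∈ Q.erase B := Finset.mem_erase.2 ⟨hc0B, hc0⟩
        refine ⟨gdown j c0, ⟨hmemQ''.2 ⟨c0, hc0e, rfl⟩, mem_gdown.2 hyc0⟩, ?_⟩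
        rintro c ⟨hc, hyc⟩
        obtain ⟨d, hd, rfl⟩ := hmemQ''.1 hc
        rw [huniq d ⟨Finset.mem_of_mem_erase hd, mem_gdown.1 hyc⟩]
      · rw [hQ'', Finset.card_image_of_injOn hdowninj, Finset.card_erase_of_mem hB, hcard]
        omega
      · intro c hc
        obtain ⟨d, hd, rfl⟩ := hmemQ''.1 hc
        have : (gup j (gdown j d)).card = d.card := by rw [hupdown d hd]
        rw [card_gup] at this
        rw [this]
        exact hsize d (Finset.mem_of_mem_erase hd)
    refine ⟨⟨j, Q''⟩, Finset.mem_product.2 ⟨Finset.mem_univ _, hQ''mem⟩, ?_⟩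
    dsimp only
    have h2 : Q''.image (gup j) = Q.erase B := by
      rw [hQ'', Finset.image_image]
      rw [show (gup j ∘ gdown j : Finset (Fin (m+2)) → Finset (Fin (m+2)))
        = fun c => gup j (gdown j c) from rfl]
      rw [Finset.image_congr (g := id) (fun c hc => hupdown c hc), Finset.image_id]
    rw [h2, show ({Fin.last (m+1), Fin.castSucc j} : Finset (Fin (m+2))) = B by
      rw [hcsj, hBeq], Finset.insert_erase hB]

/-- The generating polynomial `D_n(x) = Σ_k D_{n,k} x^k`. -/
noncomputable def assocStirlingPoly (n : ℕ) : Polynomial ℝ :=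
  ∑ k ∈ Finset.range (n + 1), Polynomial.C (assocStirling2 n k : ℝ) * Polynomial.X ^ k

lemma coeff_assocStirlingPoly (n d : ℕ) :
    (assocStirlingPoly n).coeff d = if d ≤ n then (assocStirling2 n d : ℝ) else 0 := by
  rw [assocStirlingPoly, Polynomial.finset_sum_coeff]
  simp only [Polynomial.coeff_C_mul, Polynomial.coeff_X_pow, mul_ite, mul_one, mul_zero]
  rw [Finset.sum_ite_eq (Finset.range (n+1)) d (fun k => (assocStirling2 n k : ℝ))]
  simp [Nat.lt_succ_iff]

theorem stmt_9 :
    assocStirlingPoly 0 = 1 ∧ assocStirlingPoly 1 = 0 ∧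
    ∀ n, 2 ≤ n →
      assocStirlingPoly n = Polynomial.X * derivative (assocStirlingPoly (n - 1))
        + Polynomial.C ((n : ℝ) - 1) * Polynomial.X * assocStirlingPoly (n - 2) := by
  classical
  have hD0 : assocStirling2 0 0 = 1 := by
    rw [assocStirling2_eq_card_PF, PF_zero_zero, Finset.card_singleton]
  have hDzero : ∀ n, 1 ≤ n → assocStirling2 n 0 = 0 := by
    intro n hn
    rw [assocStirling2_eq_card_PF, PF_eq_empty_of_zero hn, Finset.card_empty]
  have hDbig : ∀ n k, n < 2*k → assocStirling2 n k = 0 := by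
    intro n k h
    rw [assocStirling2_eq_card_PF, PF_eq_empty_of_big h, Finset.card_empty]
  have hrec : ∀ m k, assocStirling2 (m+2) (k+1)
      = (k+1) * assocStirling2 (m+1) (k+1) + (m+1) * assocStirling2 m k := by
    intro m k
    rw [assocStirling2_eq_card_PF, assocStirling2_eq_card_PF, assocStirling2_eq_card_PF,
      ← part1, ← part2]
    exact (Finset.card_filter_add_card_filter_not _).symm
  refine ⟨?_, ?_, ?_⟩
  · rw [assocStirlingPoly]
    simp [hD0]
  · rw [assocStirlingPoly]
    have h10 := hDzero 1 le_rfl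
    have h11 := hDbig 1 1 (by omega)
    simp [Finset.sum_range_succ, h10, h11]
  · intro n hn
    obtain ⟨m, rfl⟩ : ∃ m, n = m + 2 := ⟨n - 2, by omega⟩
    have e1 : m + 2 - 1 = m + 1 := rfl
    have e2 : m + 2 - 2 = m := rfl
    rw [e1, e2]
    ext d
    rw [Polynomial.coeff_add, mul_assoc (Polynomial.C _) Polynomial.X,
      Polynomial.coeff_C_mul]
    match d with
    | 0 =>
      rw [Polynomial.mul_coeff_zero, Polynomial.mul_coeff_zero, Polynomial.coeff_X_zero,
        coeff_assocStirlingPoly]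
      simp [hDzero (m+2) (by omega)]
    | e + 1 =>
      rw [Polynomial.coeff_X_mul, Polynomial.coeff_X_mul, Polynomial.coeff_derivative,
        coeff_assocStirlingPoly, coeff_assocStirlingPoly, coeff_assocStirlingPoly]
      by_cases h1 : e + 1 ≤ m + 1
      · rw [if_pos (by omega : e + 1 ≤ m + 2), if_pos h1, if_pos (by omega : e ≤ m)]
        rw [hrec m e]
        push_cast
        ring
      · by_cases h2 : e + 1 ≤ m + 2
        · rw [if_pos h2, if_neg h1, if_neg (by omega : ¬ e ≤ m)]
          have : e + 1 = m + 2 := by omega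
          rw [this, hDbig (m+2) (m+2) (by omega)]
          simp
        · rw [if_neg h2, if_neg h1, if_neg (by omega : ¬ e ≤ m)]
          simp
end

section
/- For reals m > 0, r ≥ 0 and integer s ≥ 1, the function F(z,x) = exp(r z + (x/m)(e^{mz} − Σ_{j=0}^{s−1} (mz)^j/j!)) satisfies ∂F/∂z − m x ∂F/∂x = (r + x·(mz)^{s−1}/(s−1)!)·F(z,x) and F(0,x) = 1. -/
theorem stmt_14 (m r : ℝ) (hm : 0 < m) (hr : 0 ≤ r) (s : ℕ) (hs : 1 ≤ s)
    (F : ℝ → ℝ → ℝ)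
    (hF : ∀ z x, F z x = Real.exp (r * z + (x / m) *
      (Real.exp (m * z) - ∑ j ∈ Finset.range s, (m * z) ^ j / (Nat.factorial j : ℝ)))) :
    (∀ z x, deriv (fun z' => F z' x) z - m * x * deriv (fun x' => F z x') x
      = (r + x * (m * z) ^ (s - 1) / (Nat.factorial (s - 1) : ℝ)) * F z x)
    ∧ ∀ x, F 0 x = 1 := by
  obtain ⟨n, rfl⟩ : ∃ n, s = n + 1 := ⟨s - 1, (Nat.succ_pred_eq_of_pos hs).symm⟩
  constructor
  · intro z x
    set E : ℝ := Real.exp (m * z) with hE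
    set T : ℝ := ∑ j ∈ Finset.range (n + 1), (m * z) ^ j / (Nat.factorial j : ℝ) with hT
    set T' : ℝ := ∑ j ∈ Finset.range n, (m * z) ^ j / (Nat.factorial j : ℝ) with hT'
    have hmz : HasDerivAt (fun z' : ℝ => m * z') m z := by
      simpa using (hasDerivAt_id z).const_mul m
    have hexp : HasDerivAt (fun z' : ℝ => Real.exp (m * z')) (m * E) z := by
      exact ((Real.hasDerivAt_exp (m * z)).comp z hmz).congr_deriv (mul_comm _ _)
    have hsum : HasDerivAt
        (fun z' : ℝ => ∑ j ∈ Finset.range (n + 1), (m * z') ^ j / (Nat.factorial j : ℝ))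
        (m * T') z := by
      have h1 : HasDerivAt
          (fun z' : ℝ => ∑ j ∈ Finset.range (n + 1), (m * z') ^ j / (Nat.factorial j : ℝ))
          (∑ j ∈ Finset.range (n + 1), (j * (m * z) ^ (j - 1) * m) / (Nat.factorial j : ℝ)) z := by
        apply HasDerivAt.fun_sum
        intro j _
        exact (hmz.pow j).div_const _
      have h2 : (∑ j ∈ Finset.range (n + 1), ((j : ℝ) * (m * z) ^ (j - 1) * m) / (Nat.factorial j : ℝ))
          = m * T' := by
        rw [Finset.sum_range_succ']
        simp only [Nat.cast_zero, zero_mul, Nat.factorial_zero, zero_div, add_zero]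
        rw [hT', Finset.mul_sum]
        apply Finset.sum_congr rfl
        intro j _
        have : ((j + 1).factorial : ℝ) = (j + 1 : ℕ) * (j.factorial : ℝ) := by
          rw [Nat.factorial_succ]; push_cast; ring
        rw [this, Nat.add_sub_cancel]
        have hj : ((j : ℕ) + 1 : ℝ) ≠ 0 := by positivity
        have hf : (j.factorial : ℝ) ≠ 0 := by exact_mod_cast j.factorial_ne_zero
        field_simp
      rw [← h2]; exact h1
    have hz : HasDerivAt (fun z' => F z' x)
        ((r + (x / m) * (m * E - m * T')) * F z x) z := by
      have hin : HasDerivAt (fun z' : ℝ => r * z' + (x / m) *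
          (Real.exp (m * z') - ∑ j ∈ Finset.range (n + 1), (m * z') ^ j / (Nat.factorial j : ℝ)))
          (r + (x / m) * (m * E - m * T')) z := by
        have := ((hexp.sub hsum).const_mul (x / m))
        simpa using ((hasDerivAt_id z).const_mul r).fun_add this
      have := hin.exp
      have heq : (fun z' => F z' x) = fun z' : ℝ => Real.exp (r * z' + (x / m) *
          (Real.exp (m * z') - ∑ j ∈ Finset.range (n + 1), (m * z') ^ j / (Nat.factorial j : ℝ))) := by
        funext z'; exact hF z' x
      rw [heq, hF z x]
      simpa [mul_comm] using this
    have hx : HasDerivAt (fun x' => F z x') (((E - T) / m) * F z x) x := by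
      have hin : HasDerivAt (fun x' : ℝ => r * z + (x' / m) * (E - T)) ((E - T) / m) x := by
        have : HasDerivAt (fun x' : ℝ => (x' / m) * (E - T)) ((E - T) / m) x := by
          simpa [div_mul_eq_mul_div, mul_div_assoc] using
            (((hasDerivAt_id x).mul_const (E - T)).div_const m)
        simpa using (hasDerivAt_const x (r * z)).fun_add this
      have := hin.exp
      have heq : (fun x' => F z x') = fun x' : ℝ => Real.exp (r * z + (x' / m) * (E - T)) := by
        funext x'; rw [hF z x']
      rw [heq, hF z x]
      simpa [mul_comm] using this
    rw [hz.deriv, hx.deriv]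
    have hTT : T - T' = (m * z) ^ n / (Nat.factorial n : ℝ) := by
      rw [hT, Finset.sum_range_succ]; ring
    have key : (r + (x / m) * (m * E - m * T')) - m * x * ((E - T) / m)
        = r + x * (m * z) ^ n / (Nat.factorial n : ℝ) := by
      have hm' : m ≠ 0 := hm.ne'
      have hTT2 : (T - T') * (Nat.factorial n : ℝ) = (m * z) ^ n := by
        rw [hTT]
        field_simp
      field_simp
      linear_combination x * hTT2
    simp only [Nat.add_sub_cancel]
    rw [← key]; ring
  · intro x
    rw [hF]
    have : ∑ j ∈ Finset.range (n + 1), (0:ℝ) ^ j / (Nat.factorial j : ℝ) = 1 := by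
      rw [Finset.sum_range_succ']
      simp [pow_succ]
    simp [this]
end
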